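/- Let H be a finite graph and σ a capacity function on H. Let P_1 and P_2 be two vertex-disjoint paths in H with σ(e) = (4,1) for every edge e of P_1 and of P_2, such that every internal vertex of P_1 and of P_2 has degree 3 in H, and σ(e) ⊆ (1,4) for every edge e not on P_1 ∪ P_2 incident to an internal vertex of P_1 or P_2. Suppose H contains two edges a c and b d, where a and b are internal vertices of P_1 at even distance along P_1 and c and d are internal vertices of P_2 at odd distance along P_2 (so these two edges together with subpaths of P_1 and P_2 form an odd cycle). Then H admits no σ-faithful flow, i.e. there is no modular 5-flow f on H with f(e) ∈ σ(e) for every edge e of H. -/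

import Mathlib

open scoped Classical

/-- A finite multigraph: finite vertex and edge types together with a reference
orientation recorded by source and target maps.  The underlying undirected graph
is obtained by forgetting the directions; reorienting an edge corresponds to
negating the value of a flow on it. -/
structure Multigraph where
  V : Type
  E : Type
  [fintypeV : Fintype V]
  [fintypeE : Fintype E]
  src : E → V
  tgt : E → V

attribute [instance] Multigraph.fintypeV Multigraph.fintypeE

namespace Multigraph

/-- `f` is a flow with respect to the reference orientation: at every vertex the
sum of the values on incoming edges equals the sum on outgoing edges. -/
def IsFlow (G : Multigraph) {M : Type*} [AddCommMonoid M] (f : G.E → M) : Prop :=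
  ∀ v : G.V, (∑ e : G.E, Set.indicator {e' : G.E | G.tgt e' = v} f e)
           = ∑ e : G.E, Set.indicator {e' : G.E | G.src e' = v} f e

/-- The edge `e` joins the vertices `v` and `w` (in either direction). -/
def Joins (G : Multigraph) (e : G.E) (v w : G.V) : Prop :=
  (G.src e = v ∧ G.tgt e = w) ∨ (G.src e = w ∧ G.tgt e = v)

/-- `v` and `w` are adjacent: some edge joins them. -/
def Adj (G : Multigraph) (v w : G.V) : Prop := ∃ e : G.E, G.Joins e v w

/-- The degree of a vertex (loops count twice). -/
noncomputable def degree (G : Multigraph) (v : G.V) : ℕ :=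
  Nat.card {e : G.E // G.src e = v} + Nat.card {e : G.E // G.tgt e = v}

/-- A set of edges is an even subgraph if every vertex is incident with an even
number of its edges (loops counting twice). -/
def IsEvenSubgraph (G : Multigraph) (J : Set G.E) : Prop :=
  ∀ v : G.V, Even (Nat.card {e : G.E // e ∈ J ∧ G.src e = v}
    + Nat.card {e : G.E // e ∈ J ∧ G.tgt e = v})

/-- `G` has a circular nowhere-zero `r`-flow: for some orientation (encoded by
possibly negating values with respect to the reference orientation) there is a
real-valued flow with all values in `[1, r-1]`. -/
def HasCNZF (G : Multigraph) (r : ℝ) : Prop :=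
  ∃ f : G.E → ℝ, G.IsFlow f ∧
    ∀ e : G.E, f e ∈ Set.Icc 1 (r - 1) ∨ -f e ∈ Set.Icc 1 (r - 1)

/-- The circular flow number `Φ_c(G)`, as an extended real (`⊤` if no `r`-CNZF
exists for any `r ≥ 2`). -/
noncomputable def flowNumber (G : Multigraph) : EReal :=
  sInf {x : EReal | ∃ r : ℝ, x = (r : EReal) ∧ 2 ≤ r ∧ G.HasCNZF r}

/-- `G` has a modular circular nowhere-zero `r`-flow: a flow with values in
`ℝ/rℤ` lying (up to reorientation) in the image of `[1, r-1]`. -/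
def HasMCNZF (G : Multigraph) (r : ℝ) : Prop :=
  ∃ f : G.E → AddCircle r, G.IsFlow f ∧
    ∀ e : G.E, f e ∈ (fun t : ℝ => (t : AddCircle r)) '' Set.Icc 1 (r - 1) ∨
      -f e ∈ (fun t : ℝ => (t : AddCircle r)) '' Set.Icc 1 (r - 1)

/-- `G` has a sub-`r`-MCNZF: an `r`-MCNZF all of whose values lie in the image
of the open interval `(1, r-1)`. -/
def HasSubMCNZF (G : Multigraph) (r : ℝ) : Prop :=
  ∃ f : G.E → AddCircle r, G.IsFlow f ∧
    ∀ e : G.E, f e ∈ (fun t : ℝ => (t : AddCircle r)) '' Set.Ioo 1 (r - 1) ∨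
      -f e ∈ (fun t : ℝ => (t : AddCircle r)) '' Set.Ioo 1 (r - 1)

end Multigraph

/-- The right endpoint representative: the representative of `b` in `(a, a+5]`. -/
def arcEnd (a b : ℤ) : ℤ := a + (if (b - a) % 5 = 0 then 5 else (b - a) % 5)

/-- The open integer arc `(a, b)` in `ℝ/5ℤ`: the image of the real interval
`(a, b')` where `b'` is the representative of `b` in `(a, a+5]`. -/
def arc (a b : ℤ) : Set (AddCircle (5 : ℝ)) :=
  (fun t : ℝ => (t : AddCircle (5 : ℝ))) '' Set.Ioo (a : ℝ) (arcEnd a b : ℝ)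

/-- `SI_5`: the symmetric subsets of `ℝ/5ℤ` that are unions of open integer arcs. -/
def SI5 : Set (Set (AddCircle (5 : ℝ))) :=
  {A | (∀ z, z ∈ A ↔ -z ∈ A) ∧ ∃ s : Set (ℤ × ℤ), A = ⋃ p ∈ s, arc p.1 p.2}

/-- The measure `Me A`: the number of (distinct) open unit arcs contained in `A`. -/
noncomputable def Me (A : Set (AddCircle (5 : ℝ))) : ℕ :=
  Set.ncard {B : Set (AddCircle (5 : ℝ)) | B ⊆ A ∧ ∃ k : ℤ, B = arc k (k + 1)}

namespace Multigraph

/-- `G⁺_{xy}`: the graph `G` with one extra edge `e⁺` from `x` to `y`. -/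
def addEdge (G : Multigraph) (x y : G.V) : Multigraph where
  V := G.V
  E := Option G.E
  src := fun e => e.elim x G.src
  tgt := fun e => e.elim y G.tgt

/-- The open 5-capacity of the generalised edge `G_{xy}`: all values that can pass
from `x` to `y` through `G` by a modular 5-flow of `G⁺_{xy}` whose values on the
edges of `G` lie in the open arc `(1,4)`. -/
def CP5 (G : Multigraph) (x y : G.V) : Set (AddCircle (5 : ℝ)) :=
  {w | ∃ f : Option G.E → AddCircle (5 : ℝ),
    (G.addEdge x y).IsFlow f ∧ (∀ e : G.E, f (some e) ∈ arc 1 4) ∧ f none = w}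

/-- `G` has a sub-5-MCNZF: a modular 5-flow with all values in the open arc `(1,4)`. -/
def HasSub5 (G : Multigraph) : Prop :=
  ∃ f : G.E → AddCircle (5 : ℝ), G.IsFlow f ∧ ∀ e : G.E, f e ∈ arc 1 4

/-- `G` has a `σ`-faithful flow: a modular 5-flow `f` with `f e ∈ σ e` for all `e`. -/
def HasFaithful (G : Multigraph) (σ : G.E → Set (AddCircle (5 : ℝ))) : Prop :=
  ∃ f : G.E → AddCircle (5 : ℝ), G.IsFlow f ∧ ∀ e : G.E, f e ∈ σ e

/-- `G` has a `σ_{J,A}`-faithful flow: a modular 5-flow with values in `A` on the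
edges of `J` and in the open arc `(1,4)` on all other edges. -/
def HasFaithfulOn (G : Multigraph) (J : Set G.E) (A : Set (AddCircle (5 : ℝ))) : Prop :=
  ∃ f : G.E → AddCircle (5 : ℝ), G.IsFlow f ∧ (∀ e ∈ J, f e ∈ A) ∧ ∀ e ∉ J, f e ∈ arc 1 4

end Multigraph

/-- Cyclic successor on `Fin n`. -/
def rot (n : ℕ) (i : Fin n) : Fin n := ⟨(i.val + 1) % n, Nat.mod_lt _ i.pos⟩

/-- The wheel `W_n`: the external cycle `v_1 … v_n` (vertices `some i`, rim edges
`Sum.inl i` from `v_i` to `v_{i+1}`) together with a hub `v_c = none` joined to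
every rim vertex by the spokes `Sum.inr i`. -/
def wheel (n : ℕ) : Multigraph where
  V := Option (Fin n)
  E := Fin n ⊕ Fin n
  src := fun e => match e with
    | Sum.inl i => some i
    | Sum.inr _ => none
  tgt := fun e => match e with
    | Sum.inl i => some (rot n i)
    | Sum.inr i => some i

/-!
Orient the edges of each path along the path and lift their flow values, which lie in `(4,1)`,
to reals in `(-1, 1)`. At an internal vertex of degree 3 the third edge carries the difference of
the lifts of the two consecutive path edges; as this difference lies in `(-2, 2)` and must lie in
`(1,4)` modulo 5, its absolute value exceeds 1, so consecutive lifts have opposite signs and the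
sign of the lift alternates along each path. The chord `a c` carries the same value out of `P₁`
as into `P₂`, which forces the lifts at `a` and at `c` to have opposite signs, and likewise at `b`
and `d`. Since `a, b` are at even and `c, d` at odd distance, this is impossible.
-/

theorem Finset.exists_eq_one_of_sum_eq_one {ι : Type*} {s : Finset ι} {n : ι → ℕ}
    (h : ∑ i ∈ s, n i = 1) : ∃ i ∈ s, n i = 1 ∧ ∀ j ∈ s, n j ≠ 0 → j = i := by
  obtain ⟨i, hi, hi0⟩ := Finset.exists_ne_zero_of_sum_ne_zero (h.symm ▸ one_ne_zero)
  have hsplit := Finset.sum_erase_add s n hi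
  have hrest : ∑ j ∈ s.erase i, n j = 0 := by omega
  refine ⟨i, hi, by omega, fun j hj hj0 => ?_⟩
  by_contra hji
  exact hj0 (Finset.sum_eq_zero_iff.1 hrest j (Finset.mem_erase.2 ⟨hji, hj⟩))

theorem iff_iff_even_dist_of_alternating {P : ℕ → Prop} {N : ℕ}
    (h : ∀ n, 0 < n → n < N → (P n ↔ ¬ P (n - 1))) {m n : ℕ} (hm : m < N) (hn : n < N) :
    P m ↔ (P n ↔ Even (Nat.dist m n)) := by
  have from_zero : ∀ n < N, P n ↔ (P 0 ↔ Even n) := by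
    intro n
    induction n with
    | zero => simp
    | succ n ih =>
      intro hn
      rw [h (n + 1) n.succ_pos hn, Nat.add_sub_cancel, ih (by omega), Nat.even_add_one]
      tauto
  have hdist : Even (Nat.dist m n) ↔ (Even m ↔ Even n) := by
    simp only [Nat.dist, Nat.even_iff]
    omega
  rw [from_zero m hm, from_zero n hn, hdist]
  tauto

namespace AddCircle

theorem eq_of_coe_eq_coe_of_abs_sub_lt {p r s : ℝ} [Fact (0 < p)]
    (h : (r : AddCircle p) = s) (hrs : |r - s| < p) : r = s := by
  have := abs_lt.1 hrs
  exact (coe_eq_coe_iff_of_mem_Ico (a := min r s)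
    ⟨min_le_left r s, by rw [min_def]; split_ifs <;> linarith⟩
    ⟨min_le_right r s, by rw [min_def]; split_ifs <;> linarith⟩).1 h

end AddCircle

instance fact_zero_lt_five : Fact ((0 : ℝ) < 5) := ⟨by norm_num⟩

theorem exists_coe_eq_of_mem_arc_four_one {z : AddCircle (5 : ℝ)} (hz : z ∈ arc 4 1) :
    ∃ t ∈ Set.Ioo (-1 : ℝ) 1, (t : AddCircle (5 : ℝ)) = z := by
  have hend : arcEnd 4 1 = 6 := by decide
  obtain ⟨t, ⟨ht₁, ht₂⟩, rfl⟩ := hz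
  simp only [hend, Int.cast_ofNat] at ht₁ ht₂
  refine ⟨t - 5, ⟨by linarith, by linarith⟩, ?_⟩
  rw [AddCircle.coe_sub, AddCircle.coe_period, sub_zero]

theorem exists_lift_of_mem_arc_four_one {k : ℕ} {g : Fin k → AddCircle (5 : ℝ)}
    (hg : ∀ j, g j ∈ arc 4 1) :
    ∃ x : ℕ → ℝ, (∀ n < k, x n ∈ Set.Ioo (-1 : ℝ) 1) ∧
      ∀ n (h : n < k), (x n : AddCircle (5 : ℝ)) = g ⟨n, h⟩ := by
  choose t ht htg using fun j => exists_coe_eq_of_mem_arc_four_one (hg j)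
  refine ⟨fun n => if h : n < k then t ⟨n, h⟩ else 0, fun n h => ?_, fun n h => ?_⟩ <;>
    simp only [dif_pos h, ht, htg]

theorem one_lt_abs_of_coe_mem_arc_one_four {r : ℝ} (hr : |r| < 2)
    (h : (r : AddCircle (5 : ℝ)) ∈ arc 1 4) : 1 < |r| := by
  have hend : arcEnd 1 4 = 4 := by decide
  obtain ⟨t, ⟨ht₁, ht₄⟩, htr⟩ := h
  simp only [hend, Int.cast_one, Int.cast_ofNat] at ht₁ ht₄ htr
  have hr' := abs_lt.1 hr
  by_cases hshift : t - r < 5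
  · have := AddCircle.eq_of_coe_eq_coe_of_abs_sub_lt htr (abs_lt.2 ⟨by linarith, hshift⟩)
    rw [lt_abs]; left; linarith
  · have htr' : ((t - 5 : ℝ) : AddCircle (5 : ℝ)) = r := by
      rw [AddCircle.coe_sub, AddCircle.coe_period, sub_zero, htr]
    have := AddCircle.eq_of_coe_eq_coe_of_abs_sub_lt htr' (abs_lt.2 ⟨by linarith, by linarith⟩)
    rw [lt_abs]; right; linarith

theorem lt_zero_iff_of_one_lt_abs_sub {s t : ℝ} (hs : s ∈ Set.Ioo (-1 : ℝ) 1)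
    (ht : t ∈ Set.Ioo (-1 : ℝ) 1) (h : 1 < |t - s|) :
    (t < 0 ↔ ¬ s < 0) ∧ (t < 0 ↔ t - s < 0) := by
  obtain ⟨hs₁, hs₂⟩ := hs
  obtain ⟨ht₁, ht₂⟩ := ht
  rcases lt_abs.1 h with h | h <;>
    refine ⟨⟨fun _ => ?_, fun _ => ?_⟩, ⟨fun _ => ?_, fun _ => ?_⟩⟩ <;> linarith

theorem lt_zero_iff_not_lt_zero_of_coe_sub_eq_neg {s t s' t' : ℝ}
    (hs : s ∈ Set.Ioo (-1 : ℝ) 1) (ht : t ∈ Set.Ioo (-1 : ℝ) 1)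
    (hs' : s' ∈ Set.Ioo (-1 : ℝ) 1) (ht' : t' ∈ Set.Ioo (-1 : ℝ) 1)
    (h : 1 < |t - s|) (h' : 1 < |t' - s'|)
    (hc : ((t' - s' : ℝ) : AddCircle (5 : ℝ)) = -((t - s : ℝ) : AddCircle (5 : ℝ))) :
    t < 0 ↔ ¬ t' < 0 := by
  rw [(lt_zero_iff_of_one_lt_abs_sub hs ht h).2, (lt_zero_iff_of_one_lt_abs_sub hs' ht' h').2]
  have hbound : |(t' - s') - -(t - s)| < 5 := by
    rw [abs_lt]; constructor <;> linarith [hs.1, hs.2, ht.1, ht.2, hs'.1, hs'.2, ht'.1, ht'.2]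
  rw [← AddCircle.coe_neg] at hc
  rw [AddCircle.eq_of_coe_eq_coe_of_abs_sub_lt hc hbound]
  rcases lt_abs.1 h with h | h <;> constructor <;> intro <;> linarith

namespace Multigraph

variable {G : Multigraph} {k l : ℕ} {p : Fin (k + 1) → G.V} {pe : Fin k → G.E}

section

variable {M : Type*} [AddCommGroup M] {f : G.E → M} {u₁ u₂ e : G.E} {u v w : G.V}

/-- Number of ends of `e` at `v`, so that `G.degree v` is its sum over all edges. -/
noncomputable def incidence (G : Multigraph) (v : G.V) (e : G.E) : ℕ :=
  (if G.src e = v then 1 else 0) + (if G.tgt e = v then 1 else 0)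

/-- The value that `e` carries into `v`; a loop at `v` carries nothing. -/
noncomputable def inflow (G : Multigraph) (f : G.E → M) (v : G.V) (e : G.E) : M :=
  (if G.tgt e = v then f e else 0) - (if G.src e = v then f e else 0)

theorem degree_eq_sum_incidence (v : G.V) : G.degree v = ∑ e, G.incidence v e := by
  unfold degree incidence
  rw [Finset.sum_add_distrib]
  congr 1 <;> rw [Nat.card_eq_fintype_card, Fintype.card_subtype, Finset.card_filter]

theorem incidence_ne_zero_iff : G.incidence v e ≠ 0 ↔ G.src e = v ∨ G.tgt e = v := by
  unfold incidence
  split_ifs <;> simp_all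

theorem inflow_eq_zero_of_incidence_eq_zero (h : G.incidence v e = 0) : G.inflow f v e = 0 := by
  unfold incidence at h
  unfold inflow
  split_ifs at h ⊢ <;> simp_all

theorem inflow_mem_of_incidence_eq_one {A : Set M} (hA : ∀ z, z ∈ A ↔ -z ∈ A) (hf : f e ∈ A)
    (h : G.incidence v e = 1) : G.inflow f v e ∈ A := by
  unfold incidence at h
  unfold inflow
  split_ifs at h ⊢ <;> first | omega | simpa using hf | simpa using (hA _).1 hf

theorem IsFlow.sum_inflow_eq_zero (hf : G.IsFlow f) (v : G.V) : ∑ e, G.inflow f v e = 0 := by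
  have := hf v
  simp only [Set.indicator_apply, Set.mem_ofPred_eq] at this
  simp only [inflow, Finset.sum_sub_distrib, this, sub_self]

theorem IsFlow.inflow_add_inflow_add_inflow (hf : G.IsFlow f) (h₁₂ : u₁ ≠ u₂) (he₁ : e ≠ u₁)
    (he₂ : e ≠ u₂) (hv : ∀ e', G.incidence v e' ≠ 0 → e' = u₁ ∨ e' = u₂ ∨ e' = e) :
    G.inflow f v u₁ + G.inflow f v u₂ + G.inflow f v e = 0 := by
  have hsub : ∑ e' ∈ {u₁, u₂, e}, G.inflow f v e' = ∑ e', G.inflow f v e' := by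
    refine Finset.sum_subset (Finset.subset_univ _) fun e' _ he' => ?_
    refine inflow_eq_zero_of_incidence_eq_zero (not_not.1 fun h => he' ?_)
    simpa using hv e' h
  rw [hf.sum_inflow_eq_zero, Finset.sum_insert (by simp [h₁₂, he₁.symm]),
    Finset.sum_pair he₂.symm, ← add_assoc] at hsub
  exact hsub

theorem exists_third_edge (hv : G.degree v = 3) (h₁₂ : u₁ ≠ u₂) (h₁ : G.incidence v u₁ = 1)
    (h₂ : G.incidence v u₂ = 1) :
    ∃ e, e ≠ u₁ ∧ e ≠ u₂ ∧ G.incidence v e = 1 ∧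
      ∀ e', G.incidence v e' ≠ 0 → e' = u₁ ∨ e' = u₂ ∨ e' = e := by
  have hrest : ∑ e ∈ Finset.univ \ {u₁, u₂}, G.incidence v e = 1 := by
    have := Finset.sum_sdiff (f := G.incidence v) (Finset.subset_univ {u₁, u₂})
    rw [Finset.sum_pair h₁₂, h₁, h₂, ← degree_eq_sum_incidence, hv] at this
    omega
  obtain ⟨e, he, he1, huniq⟩ := Finset.exists_eq_one_of_sum_eq_one hrest
  simp only [Finset.mem_sdiff, Finset.mem_univ, Finset.mem_insert, Finset.mem_singleton,
    true_and, not_or] at he huniq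
  refine ⟨e, he.1, he.2, he1, fun e' he' => ?_⟩
  by_cases h₁ : e' = u₁
  · exact Or.inl h₁
  by_cases h₂ : e' = u₂
  · exact Or.inr (Or.inl h₂)
  exact Or.inr (Or.inr (huniq e' ⟨h₁, h₂⟩ he'))

namespace Joins

theorem symm (h : G.Joins e v w) : G.Joins e w v := Or.symm h

theorem eq_or_eq_of_incident (h : G.Joins e v w) (hu : G.src e = u ∨ G.tgt e = u) :
    u = v ∨ u = w := by
  rcases h with ⟨hs, ht⟩ | ⟨hs, ht⟩ <;> rcases hu with hu | hu <;> subst hu <;> tauto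

theorem incident_left (h : G.Joins e v w) : G.src e = v ∨ G.tgt e = v := by
  rcases h with ⟨hs, _⟩ | ⟨_, ht⟩ <;> tauto

theorem incident_right (h : G.Joins e v w) : G.src e = w ∨ G.tgt e = w :=
  h.symm.incident_left

theorem incidence_eq_one (h : G.Joins e v w) (hvw : v ≠ w) : G.incidence v e = 1 := by
  unfold incidence
  rcases h with ⟨hs, ht⟩ | ⟨hs, ht⟩ <;> simp [hs, ht, hvw.symm]

theorem inflow_right (h : G.Joins e v w) (hvw : v ≠ w) : G.inflow f w e = -G.inflow f v e := by
  unfold inflow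
  rcases h with ⟨hs, ht⟩ | ⟨hs, ht⟩ <;> simp only [hs, ht, if_neg hvw, if_neg hvw.symm] <;>
    abel

end Joins

theorem notMem_range_of_incident (hpe : ∀ j, G.Joins (pe j) (p j.castSucc) (p j.succ))
    (hu : ∀ j, p j ≠ u) (he : G.src e = u ∨ G.tgt e = u) :
    e ∉ Set.range pe := by
  rintro ⟨j, rfl⟩
  rcases (hpe j).eq_or_eq_of_incident he with h | h <;> exact hu _ h.symm

theorem injective_of_path (hp : Function.Injective p)
    (hpe : ∀ j, G.Joins (pe j) (p j.castSucc) (p j.succ)) : Function.Injective pe := by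
  intro j j' h
  have hs := (hpe j').eq_or_eq_of_incident (h ▸ (hpe j).incident_left)
  have ht := (hpe j').eq_or_eq_of_incident (h ▸ (hpe j).incident_right)
  apply Fin.ext
  rcases hs with hs | hs <;> rcases ht with ht | ht <;>
    have hs' := congrArg Fin.val (hp hs) <;> have ht' := congrArg Fin.val (hp ht) <;>
    simp only [Fin.val_castSucc, Fin.val_succ] at hs' ht' <;> omega

theorem exists_side_edge (hp : Function.Injective p)
    (hpe : ∀ j, G.Joins (pe j) (p j.castSucc) (p j.succ)) {i : Fin (k + 1)} (hi : 0 < i.val)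
    (hik : i.val < k) (hdeg : G.degree (p i) = 3) :
    ∃ e ∉ Set.range pe, G.incidence (p i) e = 1 ∧
      ∀ e', G.incidence (p i) e' ≠ 0 → e' = pe ⟨i - 1, by omega⟩ ∨ e' = pe ⟨i, hik⟩ ∨ e' = e := by
  let j₀ : Fin k := ⟨i - 1, by omega⟩
  let j₁ : Fin k := ⟨i, hik⟩
  have hin : G.Joins (pe j₀) (p i) (p j₀.castSucc) := by
    have hj₀ : j₀.succ = i := Fin.ext (Nat.sub_add_cancel hi)
    simpa only [hj₀] using (hpe j₀).symm
  have hout : G.Joins (pe j₁) (p i) (p j₁.succ) := hpe j₁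
  have hprev : p i ≠ p j₀.castSucc :=
    hp.ne (Fin.ne_of_val_ne (by simp only [j₀, Fin.val_castSucc]; omega))
  have hnext : p i ≠ p j₁.succ := hp.ne (Fin.ne_of_val_ne (by simp [j₁]))
  have hne : pe j₀ ≠ pe j₁ :=
    (injective_of_path hp hpe).ne (Fin.ne_of_val_ne (by simp only [j₀, j₁]; omega))
  obtain ⟨e, he₀, he₁, he, hv⟩ := exists_third_edge hdeg hne (hin.incidence_eq_one hprev)
    (hout.incidence_eq_one hnext)
  refine ⟨e, ?_, he, hv⟩
  rintro ⟨j, rfl⟩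
  rcases (hpe j).eq_or_eq_of_incident ((incidence_ne_zero_iff (v := p i)).1 (by omega)) with h | h
  · exact he₁ (congrArg pe (Fin.ext (congrArg Fin.val (hp h)).symm))
  · have hj : i.val = j.val + 1 := congrArg Fin.val (hp h)
    exact he₀ (congrArg pe (Fin.ext (by simp only [j₀]; omega)))

theorem IsFlow.inflow_side_edge (hf : G.IsFlow f) (hp : Function.Injective p)
    (hpe : ∀ j, G.Joins (pe j) (p j.castSucc) (p j.succ)) {i : Fin (k + 1)} (hi : 0 < i.val)
    (hik : i.val < k) (hdeg : G.degree (p i) = 3) :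
    ∃ e ∉ Set.range pe, G.incidence (p i) e = 1 ∧
      ∀ e' ∉ Set.range pe, (G.src e' = p i ∨ G.tgt e' = p i) →
        G.inflow f (p i) e' = G.inflow f (p (Fin.succ ⟨i, hik⟩)) (pe ⟨i, hik⟩) -
          G.inflow f (p (Fin.succ ⟨i - 1, by omega⟩)) (pe ⟨i - 1, by omega⟩) := by
  obtain ⟨e, he, he₁, hv⟩ := exists_side_edge hp hpe hi hik hdeg
  refine ⟨e, he, he₁, fun e' he' hinc => ?_⟩
  have hpath : ∀ j, pe j ≠ e := fun j h => he ⟨j, h⟩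
  obtain rfl : e' = e := by
    rcases hv e' (incidence_ne_zero_iff.2 hinc) with h | h | h
    · exact absurd ⟨_, h.symm⟩ he'
    · exact absurd ⟨_, h.symm⟩ he'
    · exact h
  have hsum := hf.inflow_add_inflow_add_inflow
    ((injective_of_path hp hpe).ne (Fin.ne_of_val_ne (by simp only; omega)))
    (hpath _).symm (hpath _).symm hv
  have hin : Fin.succ (⟨i - 1, by omega⟩ : Fin k) = i := Fin.ext (Nat.sub_add_cancel hi)
  have hout : G.inflow f (p i) (pe ⟨i, hik⟩) = -G.inflow f (p (Fin.succ ⟨i, hik⟩)) (pe ⟨i, hik⟩) :=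
    (hpe ⟨i, hik⟩).symm.inflow_right (hp.ne (Fin.ne_of_val_ne (by simp)))
  rw [hout] at hsum
  rw [hin, ← sub_eq_zero, ← hsum]
  abel

end

variable {f : G.E → AddCircle (5 : ℝ)} {σ : G.E → Set (AddCircle (5 : ℝ))} {x : ℕ → ℝ}

/-- `x n` is a real representative in `(-1, 1)` of the value of `f` on the path edge `pe n`,
oriented along the path. -/
structure IsPathLift (f : G.E → AddCircle (5 : ℝ)) (p : Fin (k + 1) → G.V) (pe : Fin k → G.E)
    (x : ℕ → ℝ) : Prop where
  mem_Ioo : ∀ n < k, x n ∈ Set.Ioo (-1 : ℝ) 1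
  one_lt_abs_sub : ∀ n, 0 < n → n < k → 1 < |x n - x (n - 1)|
  inflow_eq : ∀ i : Fin (k + 1), 0 < i.val → i.val < k → ∀ e ∉ Set.range pe,
    (G.src e = p i ∨ G.tgt e = p i) → G.inflow f (p i) e = ((x i - x (i - 1) : ℝ) : _)

theorem IsFlow.exists_isPathLift (hf : G.IsFlow f) (hσsym : ∀ e z, z ∈ σ e ↔ -z ∈ σ e)
    (hfσ : ∀ e, f e ∈ σ e) (hp : Function.Injective p)
    (hpe : ∀ j, G.Joins (pe j) (p j.castSucc) (p j.succ)) (hσpe : ∀ j, σ (pe j) = arc 4 1)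
    (hdeg : ∀ i : Fin (k + 1), 0 < i.val → i.val < k → G.degree (p i) = 3)
    (hside : ∀ i : Fin (k + 1), 0 < i.val → i.val < k → ∀ e ∉ Set.range pe,
      (G.src e = p i ∨ G.tgt e = p i) → σ e ⊆ arc 1 4) :
    ∃ x, IsPathLift f p pe x := by
  have hg : ∀ j, G.inflow f (p j.succ) (pe j) ∈ arc 4 1 := fun j =>
    hσpe j ▸ inflow_mem_of_incidence_eq_one (hσsym (pe j)) (hfσ _)
      ((hpe j).symm.incidence_eq_one (hp.ne (Fin.ne_of_val_ne (by simp))))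
  obtain ⟨x, hx, hxg⟩ := exists_lift_of_mem_arc_four_one hg
  have hside_edge : ∀ i : Fin (k + 1), 0 < i.val → i.val < k → ∃ e ∉ Set.range pe,
      G.incidence (p i) e = 1 ∧ ∀ e' ∉ Set.range pe, (G.src e' = p i ∨ G.tgt e' = p i) →
        G.inflow f (p i) e' = ((x i - x (i - 1) : ℝ) : _) := by
    intro i hi hik
    obtain ⟨e, he, he₁, hval⟩ := hf.inflow_side_edge hp hpe hi hik (hdeg i hi hik)
    refine ⟨e, he, he₁, fun e' he' hinc => ?_⟩
    rw [hval e' he' hinc, AddCircle.coe_sub, hxg, hxg]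
  refine ⟨x, hx, fun n hn hnk => ?_, fun i hi hik => ?_⟩
  · obtain ⟨e, he, he₁, hval⟩ := hside_edge ⟨n, by omega⟩ hn hnk
    have hinc := incidence_ne_zero_iff.1 (he₁ ▸ one_ne_zero)
    have hmem := hside _ hn hnk e he hinc (inflow_mem_of_incidence_eq_one (hσsym e) (hfσ e) he₁)
    rw [hval e he hinc] at hmem
    obtain ⟨h₁, h₂⟩ := hx n hnk
    obtain ⟨h₃, h₄⟩ := hx (n - 1) (by omega)
    exact one_lt_abs_of_coe_mem_arc_one_four (abs_lt.2 ⟨by linarith, by linarith⟩) hmem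
  · obtain ⟨-, -, -, hval⟩ := hside_edge i hi hik
    exact hval

namespace IsPathLift

theorem lt_zero_iff_iff_even_dist (hx : IsPathLift f p pe x) {m n : ℕ} (hm : m < k)
    (hn : n < k) : x m < 0 ↔ (x n < 0 ↔ Even (Nat.dist m n)) :=
  iff_iff_even_dist_of_alternating (P := fun n => x n < 0)
    (fun n hn hnk => (lt_zero_iff_of_one_lt_abs_sub (hx.mem_Ioo _ (by omega))
      (hx.mem_Ioo n hnk) (hx.one_lt_abs_sub n hn hnk)).1) hm hn

theorem lt_zero_iff_not_lt_zero_of_joins {p' : Fin (l + 1) → G.V} {pe' : Fin l → G.E}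
    {y : ℕ → ℝ} (hx : IsPathLift f p pe x) (hy : IsPathLift f p' pe' y)
    (hpe : ∀ j, G.Joins (pe j) (p j.castSucc) (p j.succ))
    (hpe' : ∀ j, G.Joins (pe' j) (p' j.castSucc) (p' j.succ))
    (hdisj : ∀ i j, p i ≠ p' j) {i : Fin (k + 1)} {j : Fin (l + 1)} {e : G.E}
    (hi : 0 < i.val) (hik : i.val < k) (hj : 0 < j.val) (hjl : j.val < l)
    (he : G.Joins e (p i) (p' j)) : x i < 0 ↔ ¬ y j < 0 := by
  refine lt_zero_iff_not_lt_zero_of_coe_sub_eq_neg (hx.mem_Ioo _ (by omega)) (hx.mem_Ioo _ hik)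
    (hy.mem_Ioo _ (by omega)) (hy.mem_Ioo _ hjl) (hx.one_lt_abs_sub _ hi hik)
    (hy.one_lt_abs_sub _ hj hjl) ?_
  rw [← hx.inflow_eq i hi hik e (notMem_range_of_incident hpe (fun i' => hdisj i' j)
      he.incident_right) he.incident_left,
    ← hy.inflow_eq j hj hjl e (notMem_range_of_incident hpe' (fun j' => (hdisj i j').symm)
      he.incident_left) he.incident_right, he.inflow_right (hdisj i j)]

end IsPathLift

end Multigraph

theorem two_paths_no_faithful_general (H : Multigraph)
    (σ : H.E → Set (AddCircle (5 : ℝ)))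
    (hσsym : ∀ (e : H.E) (z : AddCircle (5 : ℝ)), z ∈ σ e ↔ -z ∈ σ e)
    (k l : ℕ)
    (p₁ : Fin (k + 1) → H.V) (pe₁ : Fin k → H.E)
    (p₂ : Fin (l + 1) → H.V) (pe₂ : Fin l → H.E)
    (hp₁ : Function.Injective p₁) (hp₂ : Function.Injective p₂)
    (hdisj : ∀ (i : Fin (k + 1)) (j : Fin (l + 1)), p₁ i ≠ p₂ j)
    (hpe₁ : ∀ i : Fin k, H.Joins (pe₁ i) (p₁ i.castSucc) (p₁ i.succ))
    (hpe₂ : ∀ i : Fin l, H.Joins (pe₂ i) (p₂ i.castSucc) (p₂ i.succ))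
    (hσ₁ : ∀ i : Fin k, σ (pe₁ i) = arc 4 1)
    (hσ₂ : ∀ i : Fin l, σ (pe₂ i) = arc 4 1)
    (hdeg₁ : ∀ i : Fin (k + 1), 0 < i.val → i.val < k → H.degree (p₁ i) = 3)
    (hdeg₂ : ∀ i : Fin (l + 1), 0 < i.val → i.val < l → H.degree (p₂ i) = 3)
    (hoff : ∀ e : H.E, e ∉ Set.range pe₁ → e ∉ Set.range pe₂ →
      ((∃ i : Fin (k + 1), 0 < i.val ∧ i.val < k ∧ (H.src e = p₁ i ∨ H.tgt e = p₁ i)) ∨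
       (∃ i : Fin (l + 1), 0 < i.val ∧ i.val < l ∧ (H.src e = p₂ i ∨ H.tgt e = p₂ i))) →
      σ e ⊆ arc 1 4)
    (a b : Fin (k + 1)) (c d : Fin (l + 1))
    (ha : 0 < a.val) (hak : a.val < k) (hb : 0 < b.val) (hbk : b.val < k)
    (hc : 0 < c.val) (hcl : c.val < l) (hd : 0 < d.val) (hdl : d.val < l)
    (heven : Even (Nat.dist a.val b.val)) (hodd : Odd (Nat.dist c.val d.val))
    (e₁ e₂ : H.E) (he₁ : H.Joins e₁ (p₁ a) (p₂ c)) (he₂ : H.Joins e₂ (p₁ b) (p₂ d)) :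
    ¬ H.HasFaithful σ := by
  rintro ⟨f, hf, hfσ⟩
  obtain ⟨x, hx⟩ := hf.exists_isPathLift hσsym hfσ hp₁ hpe₁ hσ₁ hdeg₁ fun i hi hik e he hinc =>
    hoff e he (Multigraph.notMem_range_of_incident hpe₂ (fun j => (hdisj i j).symm) hinc)
      (.inl ⟨i, hi, hik, hinc⟩)
  obtain ⟨y, hy⟩ := hf.exists_isPathLift hσsym hfσ hp₂ hpe₂ hσ₂ hdeg₂ fun j hj hjl e he hinc =>
    hoff e (Multigraph.notMem_range_of_incident hpe₁ (fun i => hdisj i j) hinc) he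
      (.inr ⟨j, hj, hjl, hinc⟩)
  have hac := hx.lt_zero_iff_not_lt_zero_of_joins hy hpe₁ hpe₂ hdisj ha hak hc hcl he₁
  have hbd := hx.lt_zero_iff_not_lt_zero_of_joins hy hpe₁ hpe₂ hdisj hb hbk hd hdl he₂
  have hab : x a < 0 ↔ x b < 0 := by simpa [heven] using hx.lt_zero_iff_iff_even_dist hak hbk
  have hcd : y c < 0 ↔ ¬ y d < 0 := by
    simpa [Nat.not_even_iff_odd.2 hodd] using hy.lt_zero_iff_iff_even_dist hcl hdl
  tauto

/-- let `P_1` and `P_2` be two vertex-disjoint paths of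
`(4,1)`-edges in `H` whose internal vertices all have degree 3 in `H`, such that
every edge not on `P_1 ∪ P_2` incident with an internal vertex of `P_1` or `P_2`
has capacity contained in `(1,4)`.  If `H` contains edges `a c` and `b d`, with
`a, b` internal vertices of `P_1` at even distance along `P_1` and `c, d`
internal vertices of `P_2` at odd distance along `P_2`, then `H` has no
`σ`-faithful flow. -/
theorem two_paths_no_faithful (H : Multigraph)
    (σ : H.E → Set (AddCircle (5 : ℝ)))
    (hσsym : ∀ (e : H.E) (z : AddCircle (5 : ℝ)), z ∈ σ e ↔ -z ∈ σ e)
    (k l : ℕ)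
    (p₁ : Fin (k + 1) → H.V) (pe₁ : Fin k → H.E)
    (p₂ : Fin (l + 1) → H.V) (pe₂ : Fin l → H.E)
    (hp₁ : Function.Injective p₁) (hp₂ : Function.Injective p₂)
    (hdisj : ∀ (i : Fin (k + 1)) (j : Fin (l + 1)), p₁ i ≠ p₂ j)
    (hpe₁ : ∀ i : Fin k, H.Joins (pe₁ i) (p₁ i.castSucc) (p₁ i.succ))
    (hpe₂ : ∀ i : Fin l, H.Joins (pe₂ i) (p₂ i.castSucc) (p₂ i.succ))
    (hσ₁ : ∀ i : Fin k, σ (pe₁ i) = arc 4 1)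
    (hσ₂ : ∀ i : Fin l, σ (pe₂ i) = arc 4 1)
    (hdeg₁ : ∀ i : Fin (k + 1), 0 < i.val → i.val < k → H.degree (p₁ i) = 3)
    (hdeg₂ : ∀ i : Fin (l + 1), 0 < i.val → i.val < l → H.degree (p₂ i) = 3)
    (hoff : ∀ e : H.E, e ∉ Set.range pe₁ → e ∉ Set.range pe₂ →
      ((∃ i : Fin (k + 1), 0 < i.val ∧ i.val < k ∧ (H.src e = p₁ i ∨ H.tgt e = p₁ i)) ∨
       (∃ i : Fin (l + 1), 0 < i.val ∧ i.val < l ∧ (H.src e = p₂ i ∨ H.tgt e = p₂ i))) →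
      σ e ⊆ arc 1 4)
    (a b : Fin (k + 1)) (c d : Fin (l + 1))
    (ha : 0 < a.val) (hak : a.val < k) (hb : 0 < b.val) (hbk : b.val < k)
    (hc : 0 < c.val) (hcl : c.val < l) (hd : 0 < d.val) (hdl : d.val < l)
    (hab : a ≠ b) (hcd : c ≠ d)
    (heven : Even (Nat.dist a.val b.val)) (hodd : Odd (Nat.dist c.val d.val))
    (e₁ e₂ : H.E) (he₁ : H.Joins e₁ (p₁ a) (p₂ c)) (he₂ : H.Joins e₂ (p₁ b) (p₂ d)) :
    ¬ H.HasFaithful σ :=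
  two_paths_no_faithful_general H σ hσsym k l p₁ pe₁ p₂ pe₂ hp₁ hp₂ hdisj hpe₁ hpe₂ hσ₁ hσ₂ hdeg₁
    hdeg₂ hoff a b c d ha hak hb hbk hc hcl hd hdl heven hodd e₁ e₂ he₁ he₂
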